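/- arXiv:1304.5498 — 4 statements merged into one kernel-verified Lean document; each statement's English description precedes it below -/
import Mathlib

section
/- Let 1 ≤ k ≤ n. If a graph G with n vertices has a k-derivation, then G has a k-derivation of length at most n - k + 1. -/
/-- A template over a universe `V`: a pair of partitions of `V`
(components and groups). -/
structure Template (V : Type*) where
  cmp : Set (Set V)
  grps : Set (Set V)
  cmp_part : Setoid.IsPartition cmp
  grps_part : Setoid.IsPartition grps

/-- `P` refines `Q`: every block of `P` is contained in a block of `Q`. -/
def Refines {V : Type*} (P Q : Set (Set V)) : Prop :=
  ∀ B ∈ P, ∃ C ∈ Q, B ⊆ C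

/-- `u` and `v` lie in a common block of `P`. -/
def SameIn {V : Type*} (P : Set (Set V)) (u v : V) : Prop :=
  ∃ B ∈ P, u ∈ B ∧ v ∈ B

/-- Conditions D1–D4 of a derivation `(T 0, …, T t)`. -/
structure IsDerivation {V : Type*} [Fintype V] (t : ℕ)
    (T : Fin (t + 1) → Template V) : Prop where
  first : (T 0).cmp.ncard = Fintype.card V
  last : (T (Fin.last t)).cmp.ncard = 1
  grps_refine : ∀ i, Refines (T i).grps (T i).cmp
  cmp_mono : ∀ i : Fin t, Refines (T i.castSucc).cmp (T i.succ).cmp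
  grps_mono : ∀ i : Fin t, Refines (T i.castSucc).grps (T i.succ).grps

/-- Every component of `T` contains at most `k` groups. -/
def TemplateWidthLE {V : Type*} (T : Template V) (k : ℕ) : Prop :=
  ∀ C ∈ T.cmp, {g ∈ T.grps | g ⊆ C}.ncard ≤ k

/-- The number of components strictly decreases at every step. -/
def StrictDeriv {V : Type*} {t : ℕ} (T : Fin (t + 1) → Template V) : Prop :=
  ∀ i : Fin t, (T i.succ).cmp.ncard < (T i.castSucc).cmp.ncard

/-- A derivation of the graph `G`: D1–D4 together with the edge,
neighborhood, and path properties. -/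
structure IsDerivationOf {V : Type*} [Fintype V] (G : SimpleGraph V) (t : ℕ)
    (T : Fin (t + 1) → Template V) extends IsDerivation t T : Prop where
  edge : ∀ i : Fin t, ∀ u v : V, u ≠ v → G.Adj u v →
    SameIn (T i.succ).grps u v → SameIn (T i.castSucc).cmp u v
  nbhd : ∀ i : Fin t, ∀ u v w : V, u ≠ v → u ≠ w → v ≠ w →
    G.Adj u v → ¬ G.Adj u w →
    SameIn (T i.succ).grps v w → SameIn (T i.castSucc).cmp u v
  path : ∀ i : Fin t, ∀ u v w x : V,
    u ≠ v → u ≠ w → u ≠ x → v ≠ w → v ≠ x → w ≠ x →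
    G.Adj u v → G.Adj u w → G.Adj v x → ¬ G.Adj w x →
    SameIn (T i.succ).grps u x → SameIn (T i.succ).grps v w →
    SameIn (T i.castSucc).cmp u v

/-- A `k`-derivation of `G`: a derivation of `G` of width at most `k`. -/
def IsKDerivationOf {V : Type*} [Fintype V] (k : ℕ) (G : SimpleGraph V)
    (t : ℕ) (T : Fin (t + 1) → Template V) : Prop :=
  IsDerivationOf G t T ∧ ∀ i, TemplateWidthLE (T i) k

/-- Syntax of `k`-expressions over vertex set `V` with labels in `Fin k`. -/
inductive CWExpr (V : Type*) (k : ℕ) where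
  | single : V → Fin k → CWExpr V k
  | union : CWExpr V k → CWExpr V k → CWExpr V k
  | relabel : Fin k → Fin k → CWExpr V k → CWExpr V k
  | addEdges : Fin k → Fin k → CWExpr V k → CWExpr V k

namespace CWExpr

variable {V : Type*} {k : ℕ}

/-- The vertices occurring in a `k`-expression. -/
def verts : CWExpr V k → Set V
  | single v _ => {v}
  | union a b => a.verts ∪ b.verts
  | relabel _ _ a => a.verts
  | addEdges _ _ a => a.verts

open Classical in
/-- The label of each vertex in the `k`-graph built by the expression. -/
noncomputable def label : CWExpr V k → V → Fin k
  | single _ i => fun _ => i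
  | union a b => fun u => if u ∈ a.verts then a.label u else b.label u
  | relabel i j a => fun u => if a.label u = i then j else a.label u
  | addEdges _ _ a => a.label

/-- The edge relation of the `k`-graph built by the expression. -/
def edges : CWExpr V k → V → V → Prop
  | single _ _ => fun _ _ => False
  | union a b => fun u v => a.edges u v ∨ b.edges u v
  | relabel _ _ a => a.edges
  | addEdges i j a => fun u v => a.edges u v ∨
      (u ∈ a.verts ∧ v ∈ a.verts ∧ u ≠ v ∧
        ((a.label u = i ∧ a.label v = j) ∨ (a.label u = j ∧ a.label v = i)))

/-- Well-formedness: unions are disjoint and edge insertions use two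
distinct labels. -/
def wf : CWExpr V k → Prop
  | single _ _ => True
  | union a b => a.wf ∧ b.wf ∧ Disjoint a.verts b.verts
  | relabel _ _ a => a.wf
  | addEdges i j a => i ≠ j ∧ a.wf

/-- The expression `e` defines the graph `G`. -/
def Defines (e : CWExpr V k) (G : SimpleGraph V) : Prop :=
  e.wf ∧ e.verts = Set.univ ∧ ∀ u v, e.edges u v ↔ G.Adj u v

end CWExpr

/-- The clique-width of a graph: the least `k` admitting a `k`-expression. -/
noncomputable def CliqueWidth {V : Type*} (G : SimpleGraph V) : ℕ :=
  sInf {k | ∃ e : CWExpr V k, e.Defines G}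

/-!
Among all `k`-derivations of `G` take one of minimal length `t` and suppose `t > n - k + 1`.
If two consecutive templates `T m`, `T (m + 1)` with `0 < m < t` have the same groups, `T m` can
be dropped: every condition linking `T m` to `T (m + 1)` reads only the groups of `T (m + 1)`.
Otherwise the number of groups drops at every step after the first, so with `r = n - k + 1` the
template `T r` has at most `n + 1 - r ≤ k` groups; merging all its components into one then yields
a `k`-derivation of length `r < t`. Both contradict minimality.
-/

section

variable {V : Type*}

lemma Refines.trans {P Q R : Set (Set V)} (hPQ : Refines P Q) (hQR : Refines Q R) :
    Refines P R := by
  intro B hB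
  obtain ⟨C, hC, hBC⟩ := hPQ B hB
  obtain ⟨D, hD, hCD⟩ := hQR C hC
  exact ⟨D, hD, hBC.trans hCD⟩

lemma refines_of_ncard_eq_one {P Q : Set (Set V)} (hQ : Setoid.IsPartition Q)
    (hQ1 : Q.ncard = 1) : Refines P Q := by
  obtain ⟨C, rfl⟩ := Set.ncard_eq_one.1 hQ1
  refine fun B _ => ⟨C, rfl, fun x _ => ?_⟩
  obtain ⟨D, ⟨hD, hxD⟩, -⟩ := hQ.2 x
  exact (Set.mem_singleton_iff.1 hD) ▸ hxD

namespace Setoid.IsPartition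

variable {P Q : Set (Set V)}

lemma ncard_le_card [Fintype V] (hP : Setoid.IsPartition P) : P.ncard ≤ Fintype.card V := by
  choose b hb using fun x => (hP.2 x).exists
  have hPb : P ⊆ Set.range b := fun B hB => by
    obtain ⟨x, hx⟩ := Setoid.nonempty_of_mem_partition hP hB
    exact ⟨x, Setoid.eq_of_mem_eqv_class hP.2 (hb x).1 (hb x).2 hB hx⟩
  calc P.ncard ≤ (b '' Set.univ).ncard := Set.ncard_le_ncard (Set.image_univ ▸ hPb)
    _ ≤ (Set.univ : Set V).ncard := Set.ncard_image_le
    _ = Fintype.card V := by rw [Set.ncard_univ, Nat.card_eq_fintype_card]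

lemma eq_of_subset (hP : Setoid.IsPartition P) (hQ : Setoid.IsPartition Q) (hPQ : P ⊆ Q) :
    P = Q := by
  refine hPQ.antisymm fun C hC => ?_
  obtain ⟨x, hx⟩ := Setoid.nonempty_of_mem_partition hQ hC
  obtain ⟨B, hB, hxB⟩ := (hP.2 x).exists
  rwa [← Setoid.eq_of_mem_eqv_class hQ.2 (hPQ hB) hxB hC hx]

/-- The map sending a block of `P` to the block of `Q` containing it is onto; if it were also
injective, every block of `Q` would be a block of `P`. -/
lemma ncard_lt_of_refines [Finite V] (hP : Setoid.IsPartition P) (hQ : Setoid.IsPartition Q)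
    (hPQ : Refines P Q) (hne : P ≠ Q) : Q.ncard < P.ncard := by
  by_contra! hle
  choose ψ hψQ hψ using hPQ
  have hψ_eq : ∀ B hB C, C ∈ Q → ∀ x ∈ B, x ∈ C → ψ B hB = C := fun B hB C hC x hxB hxC =>
    Setoid.eq_of_mem_eqv_class hQ.2 (hψQ B hB) (hψ B hB hxB) hC hxC
  have hsurj : ∀ C ∈ Q, ∃ B hB, ψ B hB = C := fun C hC => by
    obtain ⟨x, hx⟩ := Setoid.nonempty_of_mem_partition hQ hC
    obtain ⟨B, hB, hxB⟩ := (hP.2 x).exists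
    exact ⟨B, hB, hψ_eq B hB C hC x hxB hx⟩
  have hinj := Set.inj_on_of_surj_on_of_ncard_le ψ hψQ hsurj hle
  refine hne (hQ.eq_of_subset hP ?_).symm
  intro C hC
  obtain ⟨B, hB, rfl⟩ := hsurj C hC
  suffices ψ B hB ⊆ B by rwa [this.antisymm (hψ B hB)]
  intro y hy
  obtain ⟨B', hB', hyB'⟩ := (hP.2 y).exists
  rwa [hinj hB hB' (hψ_eq B' hB' _ hC y hyB' hy).symm]

end Setoid.IsPartition

lemma Nat.apply_add_le_of_forall_lt {f : ℕ → ℕ} {a b : ℕ} (hab : a ≤ b)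
    (hf : ∀ i, a ≤ i → i < b → f (i + 1) < f i) : f b + b ≤ f a + a := by
  induction b, hab using Nat.le_induction with
  | base => rfl
  | succ b hab ih =>
    have := hf b hab (lt_add_one b)
    have := ih fun i hai hib => hf i hai (hib.trans (lt_add_one b))
    omega

/-- The conditions linking `A = T (i - 1)` to `B = T i` in a derivation `T` of `G`. -/
structure IsDerivationStep (G : SimpleGraph V) (A B : Template V) : Prop where
  cmp_refines : Refines A.cmp B.cmp
  grps_refines : Refines A.grps B.grps
  edge : ∀ u v : V, u ≠ v → G.Adj u v → SameIn B.grps u v → SameIn A.cmp u v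
  nbhd : ∀ u v w : V, u ≠ v → u ≠ w → v ≠ w → G.Adj u v → ¬ G.Adj u w →
    SameIn B.grps v w → SameIn A.cmp u v
  path : ∀ u v w x : V, u ≠ v → u ≠ w → u ≠ x → v ≠ w → v ≠ x → w ≠ x →
    G.Adj u v → G.Adj u w → G.Adj v x → ¬ G.Adj w x →
    SameIn B.grps u x → SameIn B.grps v w → SameIn A.cmp u v

/-- Apart from refinement, a step only involves the components of `A` and the groups of `B`. -/
lemma IsDerivationStep.of_grps_eq {G : SimpleGraph V} {A B C : Template V}
    (h : IsDerivationStep G A B) (hcmp : Refines A.cmp C.cmp) (hgrps : C.grps = B.grps) :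
    IsDerivationStep G A C where
  cmp_refines := hcmp
  grps_refines := hgrps ▸ h.grps_refines
  edge := hgrps ▸ h.edge
  nbhd := hgrps ▸ h.nbhd
  path := hgrps ▸ h.path

/-- A `k`-derivation of `G` of length `t`, indexed by `ℕ` (only `U 0, …, U t` matter). -/
structure IsKDerivationSeq [Fintype V] (k : ℕ) (G : SimpleGraph V) (t : ℕ)
    (U : ℕ → Template V) : Prop where
  first : (U 0).cmp.ncard = Fintype.card V
  last : (U t).cmp.ncard = 1
  grps_refine : ∀ i ≤ t, Refines (U i).grps (U i).cmp
  width : ∀ i ≤ t, TemplateWidthLE (U i) k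
  step : ∀ i < t, IsDerivationStep G (U i) (U (i + 1))

lemma isKDerivationOf_iff_isKDerivationSeq [Fintype V] {k : ℕ} {G : SimpleGraph V} {t : ℕ}
    {U : ℕ → Template V} :
    IsKDerivationOf k G t (fun i : Fin (t + 1) => U i) ↔ IsKDerivationSeq k G t U := by
  constructor
  · rintro ⟨hD, hW⟩
    refine ⟨by simpa using hD.first, hD.last, fun i hi => hD.grps_refine ⟨i, by omega⟩,
      fun i hi => hW ⟨i, by omega⟩, fun i hi => ?_⟩
    exact ⟨hD.cmp_mono ⟨i, hi⟩, hD.grps_mono ⟨i, hi⟩, hD.edge ⟨i, hi⟩, hD.nbhd ⟨i, hi⟩,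
      hD.path ⟨i, hi⟩⟩
  · intro hU
    refine ⟨⟨⟨by simpa using hU.first, hU.last, fun i => hU.grps_refine i (by omega),
      fun i => (hU.step i i.2).cmp_refines, fun i => (hU.step i i.2).grps_refines⟩,
      fun i => (hU.step i i.2).edge, fun i => (hU.step i i.2).nbhd,
      fun i => (hU.step i i.2).path⟩, fun i => hU.width i (by omega)⟩

namespace IsKDerivationSeq

variable [Fintype V] {k : ℕ} {G : SimpleGraph V} {t : ℕ} {U : ℕ → Template V}

lemma eraseIdx (hU : IsKDerivationSeq k G (t + 1) U) {m : ℕ} (hm0 : 0 < m) (hmt : m ≤ t)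
    (hgrps : (U m).grps = (U (m + 1)).grps) :
    IsKDerivationSeq k G t (fun i => if i < m then U i else U (i + 1)) where
  first := by simpa [hm0] using hU.first
  last := by simpa [show ¬ t < m by omega] using hU.last
  grps_refine i hi := by split_ifs <;> exact hU.grps_refine _ (by omega)
  width i hi := by split_ifs <;> exact hU.width _ (by omega)
  step i hi := by
    rcases lt_trichotomy (i + 1) m with h | rfl | h
    · simpa [h, (lt_add_one i).trans h] using hU.step i (by omega)
    · have hcmp := (hU.step i (by omega)).cmp_refines.trans (hU.step (i + 1) (by omega)).cmp_refines
      simpa using (hU.step i (by omega)).of_grps_eq hcmp hgrps.symm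
    · simpa [show ¬ i < m by omega, show ¬ i + 1 < m by omega] using hU.step (i + 1) (by omega)

/-- `(U t).cmp` is the partition with a single block. -/
lemma truncate (hU : IsKDerivationSeq k G t U) {r : ℕ} (hr0 : 0 < r) (hrt : r ≤ t)
    (hr : (U r).grps.ncard ≤ k) :
    IsKDerivationSeq k G r (fun i => if i < r then U i else
      ⟨(U t).cmp, (U r).grps, (U t).cmp_part, (U r).grps_part⟩) where
  first := by simpa [hr0] using hU.first
  last := by simpa using hU.last
  grps_refine i hi := by
    split_ifs
    · exact hU.grps_refine i (by omega)
    · exact refines_of_ncard_eq_one (U t).cmp_part hU.last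
  width i hi := by
    split_ifs
    · exact hU.width i (by omega)
    · exact fun C _ => (Set.ncard_le_ncard (Set.sep_subset _ _)).trans hr
  step i hi := by
    by_cases h : i + 1 < r
    · simpa [h, (lt_add_one i).trans h] using hU.step i (by omega)
    · obtain rfl : i + 1 = r := by omega
      simpa using (hU.step i (by omega)).of_grps_eq (C := ⟨(U t).cmp, (U (i + 1)).grps,
        (U t).cmp_part, (U (i + 1)).grps_part⟩)
        (refines_of_ncard_eq_one (U t).cmp_part hU.last) rfl

lemma exists_shorter (hU : IsKDerivationSeq k G t U) (ht : Fintype.card V - k + 1 < t) :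
    ∃ t' < t, ∃ U' : ℕ → Template V, IsKDerivationSeq k G t' U' := by
  by_cases hdup : ∃ m, 0 < m ∧ m < t ∧ (U m).grps = (U (m + 1)).grps
  · obtain ⟨m, hm0, hmt, hgrps⟩ := hdup
    obtain ⟨s, rfl⟩ : ∃ s, t = s + 1 := ⟨t - 1, by omega⟩
    exact ⟨s, lt_add_one s, _, hU.eraseIdx hm0 (by omega) hgrps⟩
  · push Not at hdup
    have hdecr : ∀ i, 1 ≤ i → i < Fintype.card V - k + 1 →
        (U (i + 1)).grps.ncard < (U i).grps.ncard := fun i hi hir =>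
      (U i).grps_part.ncard_lt_of_refines (U (i + 1)).grps_part (hU.step i (by omega)).grps_refines
        (hdup i hi (by omega))
    have hdrop := Nat.apply_add_le_of_forall_lt (f := fun i => (U i).grps.ncard) (by omega) hdecr
    have hU1 := (U 1).grps_part.ncard_le_card
    exact ⟨_, ht, _, hU.truncate (by omega) ht.le (by omega)⟩

end IsKDerivationSeq

end

theorem exists_short_kDerivation_general {V : Type*} [Fintype V] (G : SimpleGraph V)
    (k : ℕ)
    (h : ∃ (t : ℕ) (T : Fin (t + 1) → Template V), IsKDerivationOf k G t T) :
    ∃ (t : ℕ) (T : Fin (t + 1) → Template V),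
      t ≤ Fintype.card V - k + 1 ∧ IsKDerivationOf k G t T := by
  classical
  have hseq : ∃ t, ∃ U : ℕ → Template V, IsKDerivationSeq k G t U := by
    obtain ⟨t, T, hT⟩ := h
    refine ⟨t, fun i => T (Fin.ofNat (t + 1) i), isKDerivationOf_iff_isKDerivationSeq.1 ?_⟩
    simpa using hT
  obtain ⟨U, hU⟩ := Nat.find_spec hseq
  refine ⟨Nat.find hseq, fun i => U i, ?_, isKDerivationOf_iff_isKDerivationSeq.2 hU⟩
  by_contra! hlong
  obtain ⟨t', ht', U', hU'⟩ := hU.exists_shorter hlong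
  exact Nat.find_min hseq ht' ⟨U', hU'⟩

/-- If `1 ≤ k ≤ n` and a graph with `n` vertices has a
`k`-derivation, then it has a `k`-derivation of length at most `n - k + 1`. -/
theorem exists_short_kDerivation {V : Type*} [Fintype V] (G : SimpleGraph V)
    (k : ℕ) (hk : 1 ≤ k) (hkn : k ≤ Fintype.card V)
    (h : ∃ (t : ℕ) (T : Fin (t + 1) → Template V), IsKDerivationOf k G t T) :
    ∃ (t : ℕ) (T : Fin (t + 1) → Template V),
      t ≤ Fintype.card V - k + 1 ∧ IsKDerivationOf k G t T :=
  exists_short_kDerivation_general G k h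
end

section
/- Fix k ≥ 1 and n ≥ 1. Every strict derivation over a universe of size n has k-length at most n - k, where the k-length is the number of templates containing a component of size greater than k. -/
open Classical in
/-- The `k`-length of a derivation: the number of templates containing a
component of size greater than `k`. -/
noncomputable def kLength {V : Type*} {t : ℕ} (k : ℕ)
    (T : Fin (t + 1) → Template V) : ℕ :=
  (Finset.univ.filter (fun i : Fin (t + 1) => ∃ C ∈ (T i).cmp, k < C.ncard)).card

/-!
Along a strict derivation the numbers of components are pairwise distinct, and a partition of
an `n`-element set with a block of more than `k` elements has between `1` and `n - k` blocks.
Hence `i ↦ |cmp(T i)|` maps the templates counted by the `k`-length injectively into `[1, n - k]`.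
-/

theorem Setoid.IsPartition.ncard_add_ncard_le {V : Type*} [Finite V] {P : Set (Set V)}
    (hP : Setoid.IsPartition P) {C : Set V} (hC : C ∈ P) :
    P.ncard + C.ncard ≤ Nat.card V + 1 := by
  classical
  obtain ⟨c, -⟩ := Setoid.nonempty_of_mem_partition hP hC
  let rep : Set V → V := fun B => if h : B.Nonempty then h.some else c
  have rep_mem : ∀ B ∈ P, rep B ∈ B := fun B hB => by
    have hne := Setoid.nonempty_of_mem_partition hP hB
    simpa only [rep, dif_pos hne] using hne.some_mem
  have rep_mapsTo : ∀ B ∈ P \ {C}, rep B ∈ Cᶜ := fun B hB =>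
    Set.disjoint_left.mp (hP.pairwiseDisjoint hB.1 hC hB.2) (rep_mem B hB.1)
  have rep_injOn : Set.InjOn rep (P \ {C}) := fun B₁ h₁ B₂ h₂ he => by
    by_contra hne
    exact Set.disjoint_left.mp (hP.pairwiseDisjoint h₁.1 h₂.1 hne) (rep_mem B₁ h₁.1)
      (he ▸ rep_mem B₂ h₂.1)
  have hle := Set.ncard_le_ncard_of_injOn rep rep_mapsTo rep_injOn
  rw [← Set.ncard_sdiff_singleton_add_one hC, ← Set.ncard_add_ncard_compl C]
  omega

theorem kLength_le_general {V : Type*} [Fintype V] (k t : ℕ) (T : Fin (t + 1) → Template V)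
    (hs : StrictDeriv T) :
    kLength k T ≤ Fintype.card V - k := by
  have hanti : StrictAnti fun i => (T i).cmp.ncard := Fin.strictAnti_iff_succ_lt.mpr hs
  calc kLength k T ≤ (Finset.Icc 1 (Fintype.card V - k)).card := by
        unfold kLength
        refine Finset.card_le_card_of_injOn _ (fun i hi => ?_) hanti.injective.injOn
        simp only [Finset.coe_filter, Finset.mem_univ, true_and] at hi
        obtain ⟨C, hC, hkC⟩ := hi
        have hbound := (T i).cmp_part.ncard_add_ncard_le hC
        have hpos : 0 < (T i).cmp.ncard := (Set.ncard_pos).mpr ⟨C, hC⟩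
        rw [Nat.card_eq_fintype_card] at hbound
        exact Finset.mem_Icc.mpr ⟨hpos, by omega⟩
    _ = Fintype.card V - k := by simp

/-- Every strict derivation over a universe of size `n ≥ 1` has
`k`-length at most `n - k` (for `k ≥ 1`). -/
theorem kLength_le {V : Type*} [Fintype V] (k t : ℕ) (hk : 1 ≤ k)
    (hn : 1 ≤ Fintype.card V) (T : Fin (t + 1) → Template V)
    (h : IsDerivation t T) (hs : StrictDeriv T) :
    kLength k T ≤ Fintype.card V - k :=
  kLength_le_general k t T hs
end

section
/- From a k-derivation of a graph G one can obtain a k-expression of G; that is, if G has a k-derivation, then the clique-width of G is at most k. -/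
/-!
Induct along the derivation: every component `C` of `T i` can be built with any labelling that is
constant on the groups of `T i` inside `C`. A component of `T (i + 1)` has at most `k` groups, so
it can first be built with labels that separate its groups: take the disjoint union of the
components of `T i` it contains, then insert edges between every label pair that occurs on an
edge joining two of them. This adds exactly the edges of `G`, because by the edge, neighbourhood
and path properties a single edge between groups lying in different components of `T i` already
joins the two groups completely. Any labelling constant on the groups is then reached by
relabelling, since it factors through the separating one by an idempotent map of labels, and an
idempotent map is a composite of relabellings.
-/

namespace SameIn

variable {V : Type*} {P Q : Set (Set V)} {u v : V}

theorem symm (h : SameIn P u v) : SameIn P v u :=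
  let ⟨B, hB, hu, hv⟩ := h; ⟨B, hB, hv, hu⟩

theorem mono (hPQ : Refines P Q) (h : SameIn P u v) : SameIn Q u v :=
  let ⟨B, hB, hu, hv⟩ := h; let ⟨C, hC, hBC⟩ := hPQ B hB; ⟨C, hC, hBC hu, hBC hv⟩

theorem iff_rel (hP : Setoid.IsPartition P) : SameIn P u v ↔ Setoid.mkClasses P hP.2 u v := by
  rw [Setoid.rel_iff_exists_classes, Setoid.classes_mkClasses P hP]; rfl

theorem refl (hP : Setoid.IsPartition P) (v : V) : SameIn P v v :=
  (iff_rel hP).2 (Setoid.refl' _ v)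

end SameIn

namespace Setoid.IsPartition

variable {V : Type*} {P Q : Set (Set V)}

theorem eq_of_mem_of_mem (hP : IsPartition P) {B B' : Set V} (hB : B ∈ P) (hB' : B' ∈ P) {v : V}
    (hv : v ∈ B) (hv' : v ∈ B') : B = B' :=
  (hP.2 v).unique ⟨hB, hv⟩ ⟨hB', hv'⟩

theorem subset_of_refines (hQ : IsPartition Q) (hPQ : Refines P Q) {B C : Set V} (hB : B ∈ P)
    (hC : C ∈ Q) {v : V} (hvB : v ∈ B) (hvC : v ∈ C) : B ⊆ C := by
  obtain ⟨C', hC', hBC'⟩ := hPQ B hB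
  rwa [hQ.eq_of_mem_of_mem hC' hC (hBC' hvB) hvC] at hBC'

theorem sUnion_blocks_subset_eq_of_refines (hP : IsPartition P) (hQ : IsPartition Q)
    (hPQ : Refines P Q) {C : Set V} (hC : C ∈ Q) : ⋃₀ {B ∈ P | B ⊆ C} = C := by
  refine subset_antisymm (Set.sUnion_subset fun B hB => hB.2) fun v hv => ?_
  obtain ⟨B, ⟨hB, hvB⟩, -⟩ := hP.2 v
  exact ⟨B, ⟨hB, hQ.subset_of_refines hPQ hB hC hvB hv⟩, hvB⟩

theorem exists_eq_singleton [Finite V] (hP : IsPartition P) (hcard : P.ncard = Nat.card V)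
    {B : Set V} (hB : B ∈ P) : ∃ v, B = {v} := by
  let r := mkClasses P hP.2
  have hblock : ∀ v, {x | r x v} ∈ P := fun v => classes_mkClasses P hP ▸ r.mem_classes v
  let block : V → P := fun v => ⟨{x | r x v}, hblock v⟩
  have hsurj : Function.Surjective block := by
    rintro ⟨B, hB⟩
    obtain ⟨v, hv⟩ := nonempty_of_mem_partition hP hB
    exact ⟨v, Subtype.ext (hP.eq_of_mem_of_mem (hblock v) hB (r.refl' v) hv)⟩
  have hinj := (hsurj.bijective_of_nat_card_le (by rw [Nat.card_coe_set_eq, hcard])).1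
  obtain ⟨v, hv⟩ := hsurj ⟨B, hB⟩
  have hblock_eq : ∀ x ∈ B, block x = ⟨B, hB⟩ := fun x hx =>
    Subtype.ext (hP.eq_of_mem_of_mem (hblock x) hB (r.refl' x) hx)
  refine ⟨v, subset_antisymm (fun x hx => hinj ((hblock_eq x hx).trans hv.symm)) ?_⟩
  rw [Set.singleton_subset_iff, show B = {x | r x v} from congrArg Subtype.val hv.symm]
  exact r.refl' v

end Setoid.IsPartition

namespace CWExpr

variable {V : Type*} {k : ℕ}

theorem exists_addEdges_finset (S : Finset (Fin k × Fin k)) (hS : ∀ p ∈ S, p.1 ≠ p.2)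
    (e : CWExpr V k) (he : e.wf) :
    ∃ e' : CWExpr V k, e'.wf ∧ e'.verts = e.verts ∧ e'.label = e.label ∧
      ∀ u v, e'.edges u v ↔ e.edges u v ∨ (u ∈ e.verts ∧ v ∈ e.verts ∧ u ≠ v ∧
        ((e.label u, e.label v) ∈ S ∨ (e.label v, e.label u) ∈ S)) := by
  classical
  induction S using Finset.induction_on with
  | empty => exact ⟨e, he, rfl, rfl, by simp⟩
  | insert p S _ ih =>
    obtain ⟨e', hwf, hverts, hlabel, hedges⟩ :=
      ih fun q hq => hS q (Finset.mem_insert_of_mem hq)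
    refine ⟨addEdges p.1 p.2 e', ⟨hS p (Finset.mem_insert_self p S), hwf⟩, hverts, hlabel,
      fun u v => ?_⟩
    simp only [edges, hedges, hverts, hlabel, Finset.mem_insert, Prod.ext_iff]
    tauto

end CWExpr

structure Builds {V : Type*} {k : ℕ} (G : SimpleGraph V) (e : CWExpr V k) (C : Set V)
    (ℓ : V → Fin k) : Prop where
  wf : e.wf
  verts_eq : e.verts = C
  edges_iff : ∀ u v, e.edges u v ↔ G.Adj u v ∧ u ∈ C ∧ v ∈ C
  label_eq : ∀ v ∈ C, e.label v = ℓ v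

namespace Builds

variable {V : Type*} {k : ℕ} {G : SimpleGraph V} {e : CWExpr V k} {C : Set V} {ℓ ℓ' : V → Fin k}

theorem single (G : SimpleGraph V) (v : V) (a : Fin k) :
    Builds G (CWExpr.single v a) {v} fun _ => a where
  wf := trivial
  verts_eq := rfl
  edges_iff u w := by
    simp only [CWExpr.edges, Set.mem_singleton_iff, false_iff, not_and]
    rintro huw rfl rfl
    exact huw.ne rfl
  label_eq _ _ := rfl

theorem congr_label (h : Builds G e C ℓ) (hℓ : ∀ v ∈ C, ℓ v = ℓ' v) : Builds G e C ℓ' :=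
  ⟨h.wf, h.verts_eq, h.edges_iff, fun v hv => (h.label_eq v hv).trans (hℓ v hv)⟩

theorem relabel (h : Builds G e C ℓ) (a b : Fin k) :
    Builds G (CWExpr.relabel a b e) C fun v => if ℓ v = a then b else ℓ v :=
  ⟨h.wf, h.verts_eq, h.edges_iff, fun v hv => by simp only [CWExpr.label, h.label_eq v hv]⟩

/-- Relabel the non-fixed points `x ↦ f x` one at a time: each target `f x` is a fixed point of
`f`, so it is never the source of another of these relabellings. -/
theorem exists_comp_of_idempotent (h : Builds G e C ℓ) {f : Fin k → Fin k}
    (hf : ∀ x, f (f x) = f x) : ∃ e', Builds G e' C (f ∘ ℓ) := by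
  classical
  induction hn : (Finset.univ.filter fun x => f x ≠ x).card generalizing f with
  | zero =>
    have hid : ∀ x, f x = x := by simpa [Finset.filter_eq_empty_iff] using hn
    exact ⟨e, h.congr_label fun v _ => (hid (ℓ v)).symm⟩
  | succ n ih =>
    obtain ⟨x, hx⟩ : ∃ x, f x ≠ x := by
      obtain ⟨x, hx⟩ := Finset.card_pos.1 (by rw [hn]; exact n.succ_pos)
      exact ⟨x, (Finset.mem_filter.1 hx).2⟩
    have hne : ∀ y, y ≠ x → f y ≠ x := fun y hy hfy => hx (by rw [← hfy, hf])
    set f' := Function.update f x x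
    have hf' : ∀ y, f' (f' y) = f' y := by
      intro y
      by_cases hy : y = x
      · simp [f', hy]
      · simp [f', Function.update_of_ne hy, Function.update_of_ne (hne y hy), hf]
    have hn' : (Finset.univ.filter fun y => f' y ≠ y).card = n := by
      have : (Finset.univ.filter fun y => f' y ≠ y) =
          (Finset.univ.filter fun y => f y ≠ y).erase x := by
        ext y
        by_cases hy : y = x <;> simp [f', hy, Function.update_of_ne]
      rw [this, Finset.card_erase_of_mem (by simpa using hx), hn, Nat.add_sub_cancel]
    obtain ⟨e', he'⟩ := ih hf' hn'
    refine ⟨CWExpr.relabel x (f x) e', (he'.relabel x (f x)).congr_label fun v _ => ?_⟩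
    by_cases hv : ℓ v = x
    · simp [f', hv]
    · simp [f', Function.update_of_ne hv, hne _ hv]

end Builds

/-- Take `σ = τ` on one representative of each value of `τ`, and distinct fresh labels outside
`τ '' S` elsewhere; `f` sends each fresh label to its target and fixes all other labels. -/
theorem exists_injOn_idempotent_comp_eq {α : Type*} {k : ℕ} [NeZero k] {S : Set α}
    (hS : S.Finite) (hcard : S.ncard ≤ k) (τ : α → Fin k) :
    ∃ σ : α → Fin k, Set.InjOn σ S ∧
      ∃ f : Fin k → Fin k, (∀ x, f (f x) = f x) ∧ ∀ a ∈ S, f (σ a) = τ a := by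
  classical
  obtain ⟨R, hRS, hRinj, hRim⟩ := (Set.surjOn_image τ S).exists_subset_injOn_image_eq
  have hcard_fresh : (S \ R).encard ≤ (τ '' S)ᶜ.encard := by
    have hS_split := Set.ncard_sdiff_add_ncard_of_subset hRS hS
    have hk_split := Set.ncard_add_ncard_compl (τ '' S)
    have hR := hRinj.ncard_image
    rw [hRim] at hR
    rw [Nat.card_eq_fintype_card, Fintype.card_fin] at hk_split
    rw [← hS.sdiff.cast_ncard_eq, ← (Set.toFinite _).cast_ncard_eq, Nat.cast_le]
    omega
  obtain ⟨ψ, hψ_fresh, hψinj⟩ := hS.sdiff.exists_injOn_of_encard_le hcard_fresh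
  have hψτ : ∀ a ∈ S \ R, ∀ b ∈ S, ψ a ≠ τ b := fun a ha b hb h =>
    hψ_fresh ha ⟨b, hb, h.symm⟩
  refine ⟨R.piecewise τ ψ, ?_, fun x => if h : ∃ a ∈ S \ R, ψ a = x then τ h.choose else x,
    fun x => ?_, fun a ha => ?_⟩
  · intro a ha b hb hab
    by_cases haR : a ∈ R <;> by_cases hbR : b ∈ R <;>
      simp only [Set.piecewise_eq_of_mem, Set.piecewise_eq_of_notMem, haR, hbR,
        not_false_eq_true] at hab
    · exact hRinj haR hbR hab
    · exact absurd hab.symm (hψτ b ⟨hb, hbR⟩ a ha)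
    · exact absurd hab (hψτ a ⟨ha, haR⟩ b hb)
    · exact hψinj ⟨ha, haR⟩ ⟨hb, hbR⟩ hab
  · by_cases h : ∃ a ∈ S \ R, ψ a = x
    · have hnot : ¬ ∃ a ∈ S \ R, ψ a = τ h.choose := fun ⟨a, ha, hψa⟩ =>
        hψτ a ha _ h.choose_spec.1.1 hψa
      simp only [dif_pos h, dif_neg hnot]
    · simp only [dif_neg h]
  · by_cases haR : a ∈ R
    · have hnot : ¬ ∃ b ∈ S \ R, ψ b = τ a := fun ⟨b, hb, hψb⟩ => hψτ b hb a ha hψb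
      simp only [Set.piecewise_eq_of_mem _ _ _ haR, dif_neg hnot]
    · have h : ∃ b ∈ S \ R, ψ b = ψ a := ⟨a, ⟨ha, haR⟩, rfl⟩
      simp only [Set.piecewise_eq_of_notMem _ _ _ haR, dif_pos h,
        hψinj h.choose_spec.1 ⟨ha, haR⟩ h.choose_spec.2]

namespace Setoid.IsPartition

variable {V : Type*} {k : ℕ} {P : Set (Set V)}

theorem exists_labeling_sameIn_iff [Finite V] [NeZero k] (hP : IsPartition P) {C : Set V}
    (hC : ∀ B ∈ P, ∀ v ∈ B, v ∈ C → B ⊆ C) (hwidth : {B ∈ P | B ⊆ C}.ncard ≤ k)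
    {ℓ : V → Fin k} (hℓ : ∀ u ∈ C, ∀ v ∈ C, SameIn P u v → ℓ u = ℓ v) :
    ∃ ℓ₀ : V → Fin k, (∀ u ∈ C, ∀ v ∈ C, SameIn P u v ↔ ℓ₀ u = ℓ₀ v) ∧
      ∃ f : Fin k → Fin k, (∀ x, f (f x) = f x) ∧ ∀ v ∈ C, f (ℓ₀ v) = ℓ v := by
  classical
  let r := mkClasses P hP.2
  let block : V → Set V := fun v => {x | r x v}
  have hblock : ∀ v ∈ C, block v ∈ {B ∈ P | B ⊆ C} := fun v hv =>
    have hvP : block v ∈ P := classes_mkClasses P hP ▸ r.mem_classes v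
    ⟨hvP, hC _ hvP v (r.refl' v) hv⟩
  have hblock_eq : ∀ u v, block u = block v ↔ SameIn P u v := fun u v => by
    rw [SameIn.iff_rel hP]
    refine ⟨fun h => (h ▸ r.refl' u : u ∈ block v), fun h => Set.ext fun x => ?_⟩
    exact ⟨fun hx => r.trans' hx h, fun hx => r.trans' hx (r.symm' h)⟩
  let τ : Set V → Fin k := fun B => if h : B.Nonempty then ℓ h.some else 0
  have hτ : ∀ v ∈ C, τ (block v) = ℓ v := fun v hv => by
    have hne : (block v).Nonempty := ⟨v, r.refl' v⟩
    have hsome : r hne.some v := hne.some_mem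
    simp only [τ, dif_pos hne]
    exact hℓ _ ((hblock v hv).2 hsome) v hv ((SameIn.iff_rel hP).2 hsome)
  obtain ⟨σ, hσ, f, hf, hfσ⟩ := exists_injOn_idempotent_comp_eq (Set.toFinite _) hwidth τ
  refine ⟨σ ∘ block, fun u hu v hv => ?_, f, hf, fun v hv => ?_⟩
  · rw [← hblock_eq]
    exact ⟨congrArg σ, fun h => hσ (hblock u hu) (hblock v hv) h⟩
  · rw [Function.comp_apply, hfσ _ (hblock v hv), hτ v hv]

end Setoid.IsPartition

namespace IsDerivationOf

variable {V : Type*} [Fintype V] {G : SimpleGraph V} {t : ℕ} {T : Fin (t + 1) → Template V}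

theorem not_sameIn_grps (h : IsDerivationOf G t T) (i : Fin t) {u v : V}
    (hadj : G.Adj u v) (hcmp : ¬ SameIn (T i.castSucc).cmp u v) : ¬ SameIn (T i.succ).grps u v :=
  fun hgrp => hcmp (h.edge i u v hadj.ne hadj hgrp)

theorem adj_of_sameIn_grps (h : IsDerivationOf G t T) (i : Fin t) {u v w : V}
    (hadj : G.Adj u v) (hcmp : ¬ SameIn (T i.castSucc).cmp u v)
    (hw : SameIn (T i.succ).grps v w) : G.Adj u w := by
  by_contra hno
  have huw : u ≠ w := by
    rintro rfl
    exact h.not_sameIn_grps i hadj hcmp hw.symm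
  have hvw : v ≠ w := by
    rintro rfl
    exact hno hadj
  exact hcmp (h.nbhd i u v w hadj.ne huw hvw hadj hno hw)

theorem adj_of_sameIn_grps_of_sameIn_grps (h : IsDerivationOf G t T) (i : Fin t)
    {u v x w : V} (hadj : G.Adj u v) (hcmp : ¬ SameIn (T i.castSucc).cmp u v)
    (hx : SameIn (T i.succ).grps u x) (hw : SameIn (T i.succ).grps v w) (hxw : x ≠ w) :
    G.Adj x w := by
  have hcmp' : ¬ SameIn (T i.castSucc).cmp v u := fun hvu => hcmp hvu.symm
  have huw : G.Adj u w := h.adj_of_sameIn_grps i hadj hcmp hw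
  have hvx : G.Adj v x := h.adj_of_sameIn_grps i hadj.symm hcmp' hx
  by_cases hxu : x = u
  · exact hxu ▸ huw
  by_cases hwv : w = v
  · exact hwv ▸ hvx.symm
  by_contra hno
  exact hcmp (h.path i u v w x hadj.ne huw.ne (Ne.symm hxu) (Ne.symm hwv) hvx.ne hxw.symm
    hadj huw hvx (fun hwx => hno hwx.symm) hx hw)

theorem exists_builds_union (h : IsDerivationOf G t T) (i : Fin t) {k : ℕ} {ℓ : V → Fin k}
    {U D : Set V} (hℓ : ∀ u ∈ U ∪ D, ∀ v ∈ U ∪ D, SameIn (T i.succ).grps u v ↔ ℓ u = ℓ v)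
    (hUD : ∀ u ∈ U, ∀ v ∈ D, ¬ SameIn (T i.castSucc).cmp u v)
    {eU eD : CWExpr V k} (hU : Builds G eU U ℓ) (hD : Builds G eD D ℓ) :
    ∃ e, Builds G e (U ∪ D) ℓ := by
  classical
  have hdisj : Disjoint U D := Set.disjoint_left.2 fun v hvU hvD =>
    hUD v hvU v hvD (SameIn.refl (T i.castSucc).cmp_part v)
  let S := Finset.univ.filter fun p : Fin k × Fin k =>
    ∃ u ∈ U, ∃ v ∈ D, G.Adj u v ∧ ℓ u = p.1 ∧ ℓ v = p.2
  have hS : ∀ p ∈ S, p.1 ≠ p.2 := by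
    rintro ⟨a, b⟩ hp
    obtain ⟨u, hu, v, hv, hadj, rfl, rfl⟩ := (Finset.mem_filter.1 hp).2
    exact fun hℓuv => h.not_sameIn_grps i hadj (hUD u hu v hv)
      ((hℓ u (Or.inl hu) v (Or.inr hv)).2 hℓuv)
  have hlabel : ∀ v ∈ U ∪ D, (CWExpr.union eU eD).label v = ℓ v := by
    rintro v (hv | hv)
    · simp [CWExpr.label, hU.verts_eq, hv, hU.label_eq v hv]
    · simp [CWExpr.label, hU.verts_eq, hdisj.notMem_of_mem_right hv, hD.label_eq v hv]
  have hcross : ∀ u ∈ U ∪ D, ∀ v ∈ U ∪ D, u ≠ v → (ℓ u, ℓ v) ∈ S → G.Adj u v := by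
    intro u hu v hv huv hp
    obtain ⟨u₀, hu₀, v₀, hv₀, hadj, hℓu, hℓv⟩ := (Finset.mem_filter.1 hp).2
    exact h.adj_of_sameIn_grps_of_sameIn_grps i hadj (hUD u₀ hu₀ v₀ hv₀)
      ((hℓ u₀ (Or.inl hu₀) u hu).2 hℓu) ((hℓ v₀ (Or.inr hv₀) v hv).2 hℓv) huv
  obtain ⟨e, hwf, hverts, hlabel', hedges⟩ :=
    CWExpr.exists_addEdges_finset S hS (.union eU eD) ⟨hU.wf, hD.wf, by
      rwa [hU.verts_eq, hD.verts_eq]⟩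
  have hverts_union : (CWExpr.union eU eD).verts = U ∪ D := by
    simp only [CWExpr.verts, hU.verts_eq, hD.verts_eq]
  refine ⟨e, hwf, hverts.trans hverts_union, fun u v => ?_,
    fun v hv => hlabel' ▸ hlabel v hv⟩
  rw [hedges, hverts_union]
  simp only [CWExpr.edges, hU.edges_iff, hD.edges_iff]
  constructor
  · rintro ((⟨hadj, hu, hv⟩ | ⟨hadj, hu, hv⟩) | ⟨hu, hv, huv, hp | hp⟩)
    · exact ⟨hadj, Or.inl hu, Or.inl hv⟩
    · exact ⟨hadj, Or.inr hu, Or.inr hv⟩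
    · rw [hlabel u hu, hlabel v hv] at hp
      exact ⟨hcross u hu v hv huv hp, hu, hv⟩
    · rw [hlabel u hu, hlabel v hv] at hp
      exact ⟨(hcross v hv u hu (Ne.symm huv) hp).symm, hu, hv⟩
  · rintro ⟨hadj, hu, hv⟩
    rw [hlabel u hu, hlabel v hv]
    rcases hu with hu | hu <;> rcases hv with hv | hv
    · exact Or.inl (Or.inl ⟨hadj, hu, hv⟩)
    · exact Or.inr ⟨Or.inl hu, Or.inr hv, hadj.ne, Or.inl
        (Finset.mem_filter.2 ⟨Finset.mem_univ _, u, hu, v, hv, hadj, rfl, rfl⟩)⟩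
    · exact Or.inr ⟨Or.inr hu, Or.inl hv, hadj.ne, Or.inr
        (Finset.mem_filter.2 ⟨Finset.mem_univ _, v, hv, u, hu, hadj.symm, rfl, rfl⟩)⟩
    · exact Or.inl (Or.inr ⟨hadj, hu, hv⟩)

end IsDerivationOf

theorem Setoid.IsPartition.univ_mem_of_ncard_eq_one {V : Type*} {P : Set (Set V)}
    (hP : IsPartition P) (hcard : P.ncard = 1) : Set.univ ∈ P := by
  obtain ⟨B, rfl⟩ := Set.ncard_eq_one.1 hcard
  have hB := hP.sUnion_eq_univ
  rw [Set.sUnion_singleton] at hB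
  exact hB ▸ rfl

namespace IsDerivationOf

variable {V : Type*} [Fintype V] {G : SimpleGraph V} {t : ℕ} {T : Fin (t + 1) → Template V}

theorem exists_builds_sUnion (h : IsDerivationOf G t T) (i : Fin t) {k : ℕ} {ℓ : V → Fin k}
    {C : Set V} (hℓ : ∀ u ∈ C, ∀ v ∈ C, SameIn (T i.succ).grps u v ↔ ℓ u = ℓ v)
    {S : Finset (Set V)} (hne : S.Nonempty)
    (hS : ∀ D ∈ S, D ∈ (T i.castSucc).cmp ∧ D ⊆ C ∧ ∃ e, Builds G e D ℓ) :
    ∃ e, Builds G e (⋃₀ ↑S) ℓ := by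
  induction hne using Finset.Nonempty.cons_induction with
  | singleton D => simpa using (hS D (Finset.mem_singleton_self D)).2.2
  | cons D S hDS _ ih =>
    obtain ⟨hDcmp, hDC, eD, heD⟩ := hS D (Finset.mem_cons_self D S)
    have hS' : ∀ D' ∈ S, D' ∈ (T i.castSucc).cmp ∧ D' ⊆ C ∧ ∃ e, Builds G e D' ℓ :=
      fun D' hD' => hS D' (Finset.mem_cons_of_mem hD')
    obtain ⟨eU, heU⟩ := ih hS'
    have hsub : ⋃₀ ↑S ∪ D ⊆ C :=
      Set.union_subset (Set.sUnion_subset fun D' hD' => (hS' D' hD').2.1) hDC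
    have hsep : ∀ u ∈ ⋃₀ ↑S, ∀ v ∈ D, ¬ SameIn (T i.castSucc).cmp u v := by
      rintro u ⟨D', hD', huD'⟩ v hvD ⟨B, hB, huB, hvB⟩
      have hcmp := (T i.castSucc).cmp_part
      refine hDS ?_
      rwa [← hcmp.eq_of_mem_of_mem hB hDcmp hvB hvD,
        hcmp.eq_of_mem_of_mem hB (hS' D' hD').1 huB huD']
    rw [Finset.coe_cons, Set.sUnion_insert, Set.union_comm]
    exact h.exists_builds_union i (fun u hu v hv => hℓ u (hsub hu) v (hsub hv)) hsep heU heD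

end IsDerivationOf

namespace IsKDerivationOf

variable {V : Type*} [Fintype V] {G : SimpleGraph V} {k t : ℕ} {T : Fin (t + 1) → Template V}

theorem neZero (h : IsKDerivationOf k G t T) : NeZero k := by
  have hcmp := (T (Fin.last t)).cmp_part
  have huniv := hcmp.univ_mem_of_ncard_eq_one h.1.last
  obtain ⟨v, -⟩ := Setoid.nonempty_of_mem_partition hcmp huniv
  obtain ⟨g, ⟨hg, -⟩, -⟩ := (T (Fin.last t)).grps_part.2 v
  have hpos : 0 < {g ∈ (T (Fin.last t)).grps | g ⊆ Set.univ}.ncard :=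
    (Set.ncard_pos (Set.toFinite _)).2 ⟨g, hg, Set.subset_univ g⟩
  exact ⟨(hpos.trans_le (h.2 (Fin.last t) Set.univ huniv)).ne'⟩

theorem exists_builds_succ [NeZero k] (h : IsKDerivationOf k G t T) (i : Fin t)
    (ih : ∀ D ∈ (T i.castSucc).cmp, ∀ ℓ : V → Fin k,
      (∀ u ∈ D, ∀ v ∈ D, SameIn (T i.castSucc).grps u v → ℓ u = ℓ v) → ∃ e, Builds G e D ℓ)
    {C : Set V} (hC : C ∈ (T i.succ).cmp) {ℓ : V → Fin k}
    (hℓ : ∀ u ∈ C, ∀ v ∈ C, SameIn (T i.succ).grps u v → ℓ u = ℓ v) :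
    ∃ e, Builds G e C ℓ := by
  have hd := h.1
  obtain ⟨ℓ₀, hℓ₀, f, hf, hfℓ₀⟩ := (T i.succ).grps_part.exists_labeling_sameIn_iff
    (fun B hB v hvB hvC => (T i.succ).cmp_part.subset_of_refines (hd.grps_refine i.succ)
      hB hC hvB hvC) (h.2 i.succ C hC) hℓ
  suffices ∃ e, Builds G e C ℓ₀ by
    obtain ⟨e, he⟩ := this
    obtain ⟨e', he'⟩ := he.exists_comp_of_idempotent hf
    exact ⟨e', he'.congr_label hfℓ₀⟩
  set 𝒟 := {D ∈ (T i.castSucc).cmp | D ⊆ C}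
  have h𝒟 : ⋃₀ 𝒟 = C := (T i.castSucc).cmp_part.sUnion_blocks_subset_eq_of_refines
    (T i.succ).cmp_part (hd.cmp_mono i) hC
  have hne : (Set.toFinite 𝒟).toFinset.Nonempty := by
    obtain ⟨v, hv⟩ := Setoid.nonempty_of_mem_partition (T i.succ).cmp_part hC
    rw [← h𝒟] at hv
    obtain ⟨D, hD, -⟩ := hv
    exact ⟨D, (Set.toFinite 𝒟).mem_toFinset.2 hD⟩
  rw [← h𝒟, ← (Set.toFinite 𝒟).coe_toFinset]
  refine hd.exists_builds_sUnion i hℓ₀ hne fun D hD => ?_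
  obtain ⟨hDcmp, hDC⟩ := (Set.toFinite 𝒟).mem_toFinset.1 hD
  exact ⟨hDcmp, hDC, ih D hDcmp ℓ₀ fun u hu v hv huv =>
    (hℓ₀ u (hDC hu) v (hDC hv)).1 (huv.mono (hd.grps_mono i))⟩

theorem exists_builds [NeZero k] (h : IsKDerivationOf k G t T) (i : Fin (t + 1)) {C : Set V}
    (hC : C ∈ (T i).cmp) (ℓ : V → Fin k)
    (hℓ : ∀ u ∈ C, ∀ v ∈ C, SameIn (T i).grps u v → ℓ u = ℓ v) : ∃ e, Builds G e C ℓ := by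
  induction i using Fin.induction generalizing C ℓ with
  | zero =>
    obtain ⟨v, rfl⟩ := (T 0).cmp_part.exists_eq_singleton
      (by rw [h.1.first, Nat.card_eq_fintype_card]) hC
    exact ⟨_, (Builds.single G v (ℓ v)).congr_label fun u hu => by rw [Set.eq_of_mem_singleton hu]⟩
  | succ i ih => exact h.exists_builds_succ i (fun D hD ℓ hℓ => ih hD ℓ hℓ) hC hℓ

end IsKDerivationOf

/-- From a `k`-derivation of `G` one obtains a `k`-expression of
`G`; in particular the clique-width of `G` is at most `k`. -/
theorem kDerivation_to_kExpression {V : Type*} [Fintype V]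
    (G : SimpleGraph V) (k t : ℕ) (T : Fin (t + 1) → Template V)
    (h : IsKDerivationOf k G t T) :
    (∃ e : CWExpr V k, e.Defines G) ∧ CliqueWidth G ≤ k := by
  have := h.neZero
  have huniv := (T (Fin.last t)).cmp_part.univ_mem_of_ncard_eq_one h.1.last
  obtain ⟨e, he⟩ := h.exists_builds (Fin.last t) huniv (fun _ => 0) fun _ _ _ _ _ => rfl
  have hdef : e.Defines G := ⟨he.wf, he.verts_eq, fun u v => by simp [he.edges_iff]⟩
  exact ⟨⟨e, hdef⟩, Nat.sInf_le ⟨e, hdef⟩⟩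
end

section
/- If G has a universal vertex v (a vertex adjacent to all other vertices) and G has at least 2 vertices, then the clique-width of G equals the maximum of 2 and the clique-width of G - v. -/
/-!
The universal vertex `v` has a neighbour, and an edge can only be inserted between two distinct
labels, so every `k`-expression of `G` has `k ≥ 2`; dropping the leaves outside `{v}ᶜ` turns it
into a `k`-expression of `G - v`. Conversely, given a `k`-expression of `G - v` with `k ≥ 2`,
relabel all of its vertices to `0`, add `v` with label `1` and join the labels `0` and `1`.
So `G` is `k`-expressible iff `k ≥ 2` and `G - v` is, and the formula follows by taking least
elements, since `G - v` is nonempty and hence expressible at all (`sInf ∅ = 0` would break it).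
-/

lemma Nat.sInf_setOf_le_and {P : ℕ → Prop} (hP : Monotone P) (hne : ∃ k, P k) (a : ℕ) :
    sInf {k | a ≤ k ∧ P k} = max a (sInf {k | P k}) := by
  have hmem : P (sInf {k | P k}) := Nat.sInf_mem hne
  apply le_antisymm
  · exact Nat.sInf_le ⟨le_max_left _ _, hP (le_max_right _ _) hmem⟩
  · obtain ⟨ha, hPa⟩ := Nat.sInf_mem (s := {k | a ≤ k ∧ P k})
      ⟨_, le_max_left a _, hP (le_max_right _ _) hmem⟩
    exact max_le ha (Nat.sInf_le hPa)

namespace CWExpr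

variable {V W : Type*} {k l : ℕ}

lemma mem_verts_of_edges {e : CWExpr V k} {u w : V} (h : e.edges u w) :
    u ∈ e.verts ∧ w ∈ e.verts := by
  induction e with
  | single => exact h.elim
  | union a b iha ihb =>
    exact h.elim (fun h => (iha h).imp .inl .inl) (fun h => (ihb h).imp .inr .inr)
  | relabel _ _ a ih => exact ih h
  | addEdges _ _ a ih => exact h.elim ih fun h => ⟨h.1, h.2.1⟩

lemma not_edges_of_le_one (hk : k ≤ 1) {e : CWExpr V k} (he : e.wf) (u w : V) :
    ¬ e.edges u w := by
  induction e with
  | single => exact id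
  | union a b iha ihb => exact fun h => h.elim (iha he.1) (ihb he.2.1)
  | relabel _ _ a ih => exact ih he
  | addEdges i j a ih =>
    exact fun h => h.elim (ih he.2) fun _ => he.1 (Fin.ext (by omega))

def map (f : W → V) (σ : Fin k → Fin l) : CWExpr W k → CWExpr V l
  | single w i => single (f w) (σ i)
  | union a b => union (a.map f σ) (b.map f σ)
  | relabel i j a => relabel (σ i) (σ j) (a.map f σ)
  | addEdges i j a => addEdges (σ i) (σ j) (a.map f σ)

section map

variable {f : W → V} {σ : Fin k → Fin l}

lemma verts_map (e : CWExpr W k) : (e.map f σ).verts = f '' e.verts := by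
  induction e with
  | single => exact Set.image_singleton.symm
  | union a b iha ihb => rw [map, verts, verts, iha, ihb, Set.image_union]
  | relabel _ _ a ih => exact ih
  | addEdges _ _ a ih => exact ih

lemma label_map (hf : Function.Injective f) (hσ : Function.Injective σ) (e : CWExpr W k)
    (w : W) : (e.map f σ).label (f w) = σ (e.label w) := by
  induction e with
  | single => rfl
  | union a b iha ihb =>
    simp only [map, label]
    rw [verts_map, hf.mem_set_image]
    split_ifs
    exacts [iha, ihb]
  | relabel i j a ih =>
    simp only [map, label, ih, hσ.eq_iff]
    split_ifs <;> rfl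
  | addEdges _ _ a ih => exact ih

lemma edges_map (hf : Function.Injective f) (hσ : Function.Injective σ) (e : CWExpr W k)
    (x y : V) : (e.map f σ).edges x y ↔ Relation.Map e.edges f f x y := by
  induction e generalizing x y with
  | single => simp [map, edges, Relation.Map]
  | union a b iha ihb =>
    simp only [map, edges, iha, ihb, Relation.Map]
    grind
  | relabel _ _ a ih => exact ih x y
  | addEdges i j a ih =>
    simp only [map, edges, ih, Relation.Map, verts_map]
    constructor
    · rintro (⟨u, w, h, rfl, rfl⟩ | ⟨⟨u, hu, rfl⟩, ⟨w, hw, rfl⟩, hne, hl⟩)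
      · exact ⟨u, w, .inl h, rfl, rfl⟩
      · simp only [label_map hf hσ, hσ.eq_iff] at hl
        exact ⟨u, w, .inr ⟨hu, hw, fun h => hne (congrArg f h), hl⟩, rfl, rfl⟩
    · rintro ⟨u, w, h | ⟨hu, hw, hne, hl⟩, rfl, rfl⟩
      · exact .inl ⟨u, w, h, rfl, rfl⟩
      · refine .inr ⟨⟨u, hu, rfl⟩, ⟨w, hw, rfl⟩, hf.ne hne, ?_⟩
        simpa only [label_map hf hσ, hσ.eq_iff] using hl

lemma wf_map (hf : Function.Injective f) (hσ : Function.Injective σ) {e : CWExpr W k}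
    (he : e.wf) : (e.map f σ).wf := by
  induction e with
  | single => trivial
  | union a b iha ihb =>
    refine ⟨iha he.1, ihb he.2.1, ?_⟩
    rw [verts_map, verts_map]
    exact (Set.disjoint_image_iff hf).mpr he.2.2
  | relabel _ _ a ih => exact ih he
  | addEdges _ _ a ih => exact ⟨hσ.ne he.1, ih he.2⟩

end map

section restrict

open Classical in
/-- `none` when no vertex of the expression lies in `s`, since there is no empty expression. -/
noncomputable def restrict (s : Set V) : CWExpr V k → Option (CWExpr s k)
  | single w i => if h : w ∈ s then some (single ⟨w, h⟩ i) else none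
  | union a b => Option.merge union (a.restrict s) (b.restrict s)
  | relabel i j a => (a.restrict s).map (relabel i j)
  | addEdges i j a => (a.restrict s).map (addEdges i j)

variable {s : Set V}

lemma verts_restrict (e : CWExpr V k) :
    ((e.restrict s).map verts).getD ∅ = (↑) ⁻¹' e.verts := by
  induction e with
  | single w i =>
    by_cases hw : w ∈ s
    · ext x
      simp [restrict, hw, verts, Subtype.ext_iff]
    · ext x
      simpa [restrict, hw, verts] using fun h : ↑x = w => hw (h ▸ x.2)
  | union a b iha ihb =>
    rw [verts, Set.preimage_union, ← iha, ← ihb, restrict]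
    cases a.restrict s <;> cases b.restrict s <;> simp [Option.merge, verts]
  | relabel _ _ a ih => rw [restrict, Option.map_map]; exact ih
  | addEdges _ _ a ih => rw [restrict, Option.map_map]; exact ih

lemma verts_of_mem_restrict {e : CWExpr V k} {e' : CWExpr s k} (h : e' ∈ e.restrict s) :
    e'.verts = (↑) ⁻¹' e.verts := by
  have := verts_restrict (s := s) e
  rwa [Option.mem_def.mp h] at this

lemma not_mem_verts_of_restrict_eq_none {e : CWExpr V k} (h : e.restrict s = none) (x : s) :
    ↑x ∉ e.verts := by
  simpa [h] using (Set.ext_iff.mp (verts_restrict e) x).symm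

lemma mem_restrict_single {w : V} {i : Fin k} {e' : CWExpr s k} :
    e' ∈ (single w i).restrict s ↔ ∃ hw : w ∈ s, e' = single ⟨w, hw⟩ i := by
  by_cases hw : w ∈ s <;> simp [restrict, hw, eq_comm]

lemma mem_restrict_union {a b : CWExpr V k} {e' : CWExpr s k} :
    e' ∈ (union a b).restrict s ↔ (a.restrict s = none ∧ e' ∈ b.restrict s) ∨
      (e' ∈ a.restrict s ∧ b.restrict s = none) ∨
      ∃ a' ∈ a.restrict s, ∃ b' ∈ b.restrict s, e' = union a' b' := by
  rw [restrict]
  rcases a.restrict s with _ | a' <;> rcases b.restrict s with _ | b' <;>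
    simp [Option.merge, eq_comm]

lemma label_of_mem_restrict {e : CWExpr V k} {e' : CWExpr s k} (h : e' ∈ e.restrict s)
    {x : s} (hx : x ∈ e'.verts) : e'.label x = e.label x := by
  induction e generalizing e' with
  | single w i =>
    obtain ⟨hw, rfl⟩ := mem_restrict_single.mp h
    rfl
  | union a b iha ihb =>
    obtain ⟨ha, hb⟩ | ⟨ha, hb⟩ | ⟨a', ha, b', hb, rfl⟩ := mem_restrict_union.mp h
    · simp [label, not_mem_verts_of_restrict_eq_none ha, ihb hb hx]
    · have hxa : ↑x ∈ a.verts := (Set.ext_iff.mp (verts_of_mem_restrict ha) x).mp hx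
      simp [label, hxa, iha ha hx]
    · have hva := Set.ext_iff.mp (verts_of_mem_restrict ha) x
      simp only [label]
      by_cases hxa : ↑x ∈ a.verts
      · rw [if_pos hxa, if_pos (hva.mpr hxa)]
        exact iha ha (hva.mpr hxa)
      · rw [if_neg hxa, if_neg (mt hva.mp hxa)]
        exact ihb hb (hx.resolve_left (mt hva.mp hxa))
  | relabel _ _ a ih =>
    obtain ⟨a', ha', rfl⟩ := Option.mem_map.mp h
    simp only [label, ih ha' hx]
  | addEdges _ _ a ih =>
    obtain ⟨a', ha', rfl⟩ := Option.mem_map.mp h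
    exact ih (e' := a') ha' hx

lemma edges_of_mem_restrict {e : CWExpr V k} {e' : CWExpr s k} (h : e' ∈ e.restrict s)
    (x y : s) : e'.edges x y ↔ e.edges x y := by
  induction e generalizing e' with
  | single w i =>
    obtain ⟨hw, rfl⟩ := mem_restrict_single.mp h
    rfl
  | union a b iha ihb =>
    obtain ⟨ha, hb⟩ | ⟨ha, hb⟩ | ⟨a', ha, b', hb, rfl⟩ := mem_restrict_union.mp h
    · have : ¬ a.edges x y := fun hxy =>
        not_mem_verts_of_restrict_eq_none ha x (mem_verts_of_edges hxy).1
      simp [edges, this, ihb hb]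
    · have : ¬ b.edges x y := fun hxy =>
        not_mem_verts_of_restrict_eq_none hb x (mem_verts_of_edges hxy).1
      simp [edges, this, iha ha]
    · exact or_congr (iha ha) (ihb hb)
  | relabel _ _ a ih =>
    obtain ⟨a', ha', rfl⟩ := Option.mem_map.mp h
    exact ih (e' := a') ha'
  | addEdges _ _ a ih =>
    obtain ⟨a', ha', rfl⟩ := Option.mem_map.mp h
    have hva := Set.ext_iff.mp (verts_of_mem_restrict ha')
    simp only [edges, ih ha', hva, ne_eq, Subtype.ext_iff]
    refine or_congr_right (and_congr_right fun hx => and_congr_right fun hy => ?_)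
    rw [label_of_mem_restrict ha' ((hva x).mpr hx), label_of_mem_restrict ha' ((hva y).mpr hy)]

lemma wf_of_mem_restrict {e : CWExpr V k} (he : e.wf) {e' : CWExpr s k}
    (h : e' ∈ e.restrict s) : e'.wf := by
  induction e generalizing e' with
  | single w i =>
    obtain ⟨hw, rfl⟩ := mem_restrict_single.mp h
    trivial
  | union a b iha ihb =>
    obtain ⟨ha, hb⟩ | ⟨ha, hb⟩ | ⟨a', ha, b', hb, rfl⟩ := mem_restrict_union.mp h
    · exact ihb he.2.1 hb
    · exact iha he.1 ha
    · refine ⟨iha he.1 ha, ihb he.2.1 hb, ?_⟩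
      rw [verts_of_mem_restrict ha, verts_of_mem_restrict hb]
      exact he.2.2.preimage _
  | relabel _ _ a ih =>
    obtain ⟨a', ha', rfl⟩ := Option.mem_map.mp h
    exact ih he (e' := a') ha'
  | addEdges _ _ a ih =>
    obtain ⟨a', ha', rfl⟩ := Option.mem_map.mp h
    exact ⟨he.1, ih he.2 ha'⟩

lemma exists_mem_restrict {e : CWExpr V k} {x : V} (hx : x ∈ e.verts) (hxs : x ∈ s) :
    ∃ e', e' ∈ e.restrict s := by
  rcases h : e.restrict s with _ | e'
  · exact absurd hx (not_mem_verts_of_restrict_eq_none h ⟨x, hxs⟩)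
  · exact ⟨e', rfl⟩

end restrict

lemma label_foldr_relabel (z : Fin k) (L : List (Fin k)) (e : CWExpr V k) (u : V) :
    (L.foldr (fun i a => relabel i z a) e).label u = if e.label u ∈ L then z else e.label u := by
  induction L with
  | nil => simp
  | cons i L ih =>
    simp only [List.foldr_cons, label, ih, List.mem_cons]
    split_ifs <;> simp_all

def relabelAll (z : Fin k) (e : CWExpr V k) : CWExpr V k :=
  (List.finRange k).foldr (fun i a => relabel i z a) e

lemma label_relabelAll (z : Fin k) (e : CWExpr V k) (u : V) : (e.relabelAll z).label u = z := by
  simp [relabelAll, label_foldr_relabel]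

lemma verts_relabelAll (z : Fin k) (e : CWExpr V k) : (e.relabelAll z).verts = e.verts := by
  unfold relabelAll; induction List.finRange k <;> simp_all [verts]

lemma edges_relabelAll (z : Fin k) (e : CWExpr V k) : (e.relabelAll z).edges = e.edges := by
  unfold relabelAll; induction List.finRange k <;> simp_all [edges]

lemma wf_relabelAll (z : Fin k) {e : CWExpr V k} (he : e.wf) : (e.relabelAll z).wf := by
  unfold relabelAll; induction List.finRange k <;> simp_all [wf]

lemma edges_addEdges_union_single {e : CWExpr V k} {z z' : Fin k} (hz : z ≠ z')
    (hl : ∀ u, e.label u = z) {v : V} (hv : v ∉ e.verts) (u w : V) :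
    (addEdges z z' (union e (single v z'))).edges u w ↔
      e.edges u w ∨ (u ∈ e.verts ∧ w = v) ∨ (u = v ∧ w ∈ e.verts) := by
  have hlz : ∀ x, (union e (single v z')).label x = z ↔ x ∈ e.verts := fun x => by
    by_cases hx : x ∈ e.verts <;> simp [label, hx, hl, hz.symm]
  have hlz' : ∀ x, (union e (single v z')).label x = z' ↔ x ∉ e.verts := fun x => by
    by_cases hx : x ∈ e.verts <;> simp [label, hx, hl, hz]
  simp only [edges, verts, Set.mem_union, Set.mem_singleton_iff, hlz, hlz']
  grind

section build

variable {n : ℕ}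

lemma exists_edgeless (f : V → Fin n) {L : List V} (hL : L ≠ []) (hnd : L.Nodup) :
    ∃ e : CWExpr V n, e.wf ∧ e.verts = {x | x ∈ L} ∧ (∀ u ∈ L, e.label u = f u) ∧
      ∀ u w, ¬ e.edges u w := by
  induction L with
  | nil => exact absurd rfl hL
  | cons x t ih =>
    rcases eq_or_ne t [] with rfl | ht
    · exact ⟨single x (f x), trivial, by ext; simp [verts], by simp [label], fun _ _ => id⟩
    obtain ⟨e, he, hv, hl, hE⟩ := ih ht (List.nodup_cons.mp hnd).2
    refine ⟨union (single x (f x)) e, ⟨trivial, he, ?_⟩, ?_, ?_, ?_⟩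
    · simpa [verts, hv] using (List.nodup_cons.mp hnd).1
    · ext; simp [verts, hv]
    · intro u hu
      by_cases hux : u = x
      · simp [label, verts, hux]
      · simpa [label, verts, hux] using hl u ((List.mem_cons.mp hu).resolve_left hux)
    · simpa [edges] using hE

lemma edges_addEdges_of_label_eq {f : V → Fin n} (hf : Function.Injective f)
    {e : CWExpr V n} (hv : e.verts = Set.univ) (hl : ∀ u, e.label u = f u) {a b : V}
    (hab : a ≠ b) (u w : V) :
    (addEdges (f a) (f b) e).edges u w ↔
      e.edges u w ∨ (u = a ∧ w = b) ∨ (u = b ∧ w = a) := by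
  simp only [edges, hv, Set.mem_univ, hl, hf.eq_iff, true_and]
  grind

lemma exists_addEdges_list {f : V → Fin n} (hf : Function.Injective f) {e : CWExpr V n}
    (he : e.wf) (hv : e.verts = Set.univ) (hl : ∀ u, e.label u = f u) (P : List (V × V))
    (hP : ∀ q ∈ P, q.1 ≠ q.2) :
    ∃ e' : CWExpr V n, e'.wf ∧ e'.verts = Set.univ ∧ (∀ u, e'.label u = f u) ∧
      ∀ u w, e'.edges u w ↔ e.edges u w ∨ (u, w) ∈ P ∨ (w, u) ∈ P := by
  induction P with
  | nil => exact ⟨e, he, hv, hl, by simp⟩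
  | cons q P ih =>
    obtain ⟨e', he', hv', hl', hE'⟩ := ih fun q' hq' => hP q' (List.mem_cons_of_mem q hq')
    have hq := hP q List.mem_cons_self
    refine ⟨addEdges (f q.1) (f q.2) e', ⟨hf.ne hq, he'⟩, hv', hl', fun u w => ?_⟩
    rw [edges_addEdges_of_label_eq hf hv' hl' hq, hE']
    grind

end build

end CWExpr

namespace SimpleGraph

open CWExpr

variable {V : Type*} {G : SimpleGraph V} {k l : ℕ}

def Expressible (G : SimpleGraph V) (k : ℕ) : Prop :=
  ∃ e : CWExpr V k, e.Defines G

lemma Expressible.mono (h : G.Expressible k) (hkl : k ≤ l) : G.Expressible l := by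
  obtain ⟨e, he, hv, hE⟩ := h
  refine ⟨e.map id (Fin.castLE hkl), wf_map Function.injective_id (Fin.castLE_injective hkl) he,
    by rw [verts_map, hv, Set.image_id], fun u w => ?_⟩
  rw [edges_map Function.injective_id (Fin.castLE_injective hkl), Relation.map_id_id, hE]

lemma Expressible.two_le (h : G.Expressible k) {u w : V} (huw : G.Adj u w) : 2 ≤ k := by
  obtain ⟨e, he, -, hE⟩ := h
  by_contra! hk
  exact not_edges_of_le_one (by omega) he u w ((hE u w).mpr huw)

lemma Expressible.induce (h : G.Expressible k) {s : Set V} (hs : s.Nonempty) :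
    (G.induce s).Expressible k := by
  obtain ⟨e, he, hv, hE⟩ := h
  obtain ⟨x, hx⟩ := hs
  obtain ⟨e', he'⟩ := exists_mem_restrict (hv ▸ Set.mem_univ x) hx
  exact ⟨e', wf_of_mem_restrict he he', by rw [verts_of_mem_restrict he', hv, Set.preimage_univ],
    fun u w => (edges_of_mem_restrict he' u w).trans (hE u w)⟩

lemma expressible_card [Fintype V] [Nonempty V] (G : SimpleGraph V) :
    G.Expressible (Fintype.card V) := by
  classical
  let f := Fintype.equivFin V
  obtain ⟨e₀, he₀, hv₀, hl₀, hE₀⟩ := exists_edgeless f (L := Finset.univ.toList)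
    (by simpa using Finset.univ_nonempty.ne_empty) (Finset.nodup_toList _)
  obtain ⟨e, he, hv, -, hE⟩ := exists_addEdges_list f.injective he₀ (by simpa using hv₀)
    (by simpa using hl₀) (Finset.univ.filter fun q : V × V => G.Adj q.1 q.2).toList
    (by simpa using fun _ _ h => h.ne)
  refine ⟨e, he, hv, fun u w => ?_⟩
  simp [hE, hE₀, G.adj_comm]

lemma Expressible.of_induce_compl_singleton {v : V} (huniv : ∀ w, w ≠ v → G.Adj v w)
    (h : (G.induce ({v}ᶜ : Set V)).Expressible k) (hk : 2 ≤ k) : G.Expressible k := by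
  obtain ⟨e', he', hv', hE'⟩ := h
  let z : Fin k := ⟨0, by omega⟩
  let z' : Fin k := ⟨1, by omega⟩
  have hz : z ≠ z' := by simp [z, z', Fin.ext_iff]
  obtain ⟨e, he, hve, hle, hE⟩ : ∃ e : CWExpr V k, e.wf ∧ e.verts = {v}ᶜ ∧
      (∀ u, e.label u = z) ∧ ∀ u w, e.edges u w ↔ u ≠ v ∧ w ≠ v ∧ G.Adj u w := by
    refine ⟨(e'.map Subtype.val id).relabelAll z,
      wf_relabelAll z (wf_map Subtype.val_injective Function.injective_id he'),
      by rw [verts_relabelAll, verts_map, hv', Set.image_univ, Subtype.range_coe],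
      label_relabelAll z _, fun u w => ?_⟩
    rw [edges_relabelAll, edges_map Subtype.val_injective Function.injective_id]
    constructor
    · rintro ⟨a, b, hab, rfl, rfl⟩
      exact ⟨a.2, b.2, (hE' a b).mp hab⟩
    · rintro ⟨hu, hw, huw⟩
      exact ⟨⟨u, hu⟩, ⟨w, hw⟩, (hE' _ _).mpr huw, rfl, rfl⟩
  refine ⟨addEdges z z' (union e (single v z')), ⟨hz, he, trivial, by simp [verts, hve]⟩,
    by simpa [verts, hve] using Set.compl_union_self {v}, fun u w => ?_⟩
  rw [edges_addEdges_union_single hz hle (by simp [hve]), hE, hve]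
  constructor
  · rintro (h | ⟨hu, rfl⟩ | ⟨rfl, hw⟩)
    exacts [h.2.2, (huniv u hu).symm, huniv w hw]
  · intro huw
    rcases eq_or_ne u v with rfl | hu
    · exact .inr (.inr ⟨rfl, huw.ne'⟩)
    rcases eq_or_ne w v with rfl | hw
    · exact .inr (.inl ⟨hu, rfl⟩)
    · exact .inl ⟨hu, hw, huw⟩

end SimpleGraph

/-- if `v` is a universal vertex of `G` and `G` has at least two
vertices, then `cwd(G) = max 2 (cwd(G - v))`. -/
theorem cliqueWidth_universal_vertex {V : Type*} [Fintype V]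
    (G : SimpleGraph V) (v : V) (huniv : ∀ w, w ≠ v → G.Adj v w)
    (h2 : 2 ≤ Fintype.card V) :
    CliqueWidth G = max 2 (CliqueWidth (G.induce ({v}ᶜ : Set V))) := by
  classical
  obtain ⟨w, hw⟩ := Fintype.exists_ne_of_one_lt_card h2 v
  have hne : ({v}ᶜ : Set V).Nonempty := ⟨w, hw⟩
  have : Nonempty ({v}ᶜ : Set V) := hne.to_subtype
  have hsets :
      {k | G.Expressible k} = {k | 2 ≤ k ∧ (G.induce ({v}ᶜ : Set V)).Expressible k} :=
    Set.ext fun k => ⟨fun h => ⟨h.two_le (huniv w hw), h.induce hne⟩,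
      fun h => h.2.of_induce_compl_singleton huniv h.1⟩
  exact (congrArg sInf hsets).trans <| Nat.sInf_setOf_le_and (fun _ _ hkl h => h.mono hkl)
    ⟨_, SimpleGraph.expressible_card _⟩ 2
end
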